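/- Let S1, S2 be finite subsets of a finite linearly ordered set Ω with |S1| = f1, |S2| = f2, |S1 ∩ S2| = a, and S1 ∪ S2 nonempty. If π is a uniformly random permutation of Ω and z1 = min(π(S1)), z2 = min(π(S2)), then Pr(z1 > z2) = (f2 - a) / (f1 + f2 - a). -/

import Mathlib

open Finset

/-! The point `m` of `S1 ∪ S2` at which `π` is smallest satisfies `z2 < z1` exactly when
`m ∈ S2 \ S1`. Precomposing `π` with the transposition of two points of `S1 ∪ S2` leaves
`π (S1 ∪ S2)` unchanged and swaps them as candidates for `m`, so `m` is uniformly distributed on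
`S1 ∪ S2` and the probability is `|S2 \ S1| / |S1 ∪ S2|`. -/

namespace Equiv.Perm

variable {Ω : Type*} [LinearOrder Ω]

def argminOn (π : Perm Ω) (U : Finset Ω) (hU : U.Nonempty) : Ω :=
  π.symm ((U.map π.toEmbedding).min' (hU.map))

variable (π : Perm Ω) {U : Finset Ω} (hU : U.Nonempty)

theorem argminOn_mem : π.argminOn U hU ∈ U := by
  obtain ⟨u, hu, h⟩ := mem_map.1 (min'_mem (U.map π.toEmbedding) hU.map)
  simpa [argminOn, ← h] using hu

theorem apply_argminOn_le {u : Ω} (hu : u ∈ U) : π (π.argminOn U hU) ≤ π u := by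
  simpa [argminOn] using min'_le _ _ (mem_map_of_mem π.toEmbedding hu)

theorem eq_argminOn {m : Ω} (hm : m ∈ U) (hle : ∀ u ∈ U, π m ≤ π u) : m = π.argminOn U hU :=
  π.injective <| (hle _ (π.argminOn_mem hU)).antisymm (π.apply_argminOn_le hU hm)

theorem argminOn_mul_swap [DecidableEq Ω] {x y : Ω} (hx : x ∈ U) (hy : y ∈ U) :
    (π * swap x y).argminOn U hU = swap x y (π.argminOn U hU) := by
  have hswap : ∀ {u}, u ∈ U → swap x y u ∈ U := fun hu => by
    rw [swap_apply_def]; split_ifs <;> assumption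
  refine ((π * swap x y).eq_argminOn hU (hswap (π.argminOn_mem hU)) fun u hu => ?_).symm
  simpa using π.apply_argminOn_le hU (hswap hu)

section MinImage

variable [DecidableEq Ω] {S : Finset Ω} (hSU : S ⊆ U)
include hSU

theorem coe_apply_argminOn_le_min_image : (π (π.argminOn U hU) : WithTop Ω) ≤ (S.image π).min :=
  Finset.le_min <| forall_mem_image.2 fun _ hs => WithTop.coe_le_coe.2 <|
    π.apply_argminOn_le hU (hSU hs)

theorem min_image_eq_of_argminOn_mem (hm : π.argminOn U hU ∈ S) :
    (S.image π).min = π (π.argminOn U hU) :=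
  (min_le (mem_image_of_mem π hm)).antisymm (π.coe_apply_argminOn_le_min_image hU hSU)

theorem coe_apply_argminOn_lt_min_image (hm : π.argminOn U hU ∉ S) :
    (π (π.argminOn U hU) : WithTop Ω) < (S.image π).min := by
  refine (π.coe_apply_argminOn_le_min_image hU hSU).lt_of_ne fun h => hm ?_
  simpa using mem_of_min h.symm

end MinImage

theorem min_image_lt_min_image_iff [DecidableEq Ω] {S₁ S₂ : Finset Ω} (hne : (S₁ ∪ S₂).Nonempty) :
    (S₂.image π).min < (S₁.image π).min ↔ π.argminOn (S₁ ∪ S₂) hne ∈ S₂ \ S₁ := by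
  have hm := π.argminOn_mem hne
  by_cases h₁ : π.argminOn (S₁ ∪ S₂) hne ∈ S₁
  · rw [π.min_image_eq_of_argminOn_mem hne subset_union_left h₁]
    simpa [h₁] using π.coe_apply_argminOn_le_min_image hne subset_union_right
  · have h₂ := (mem_union.1 hm).resolve_left h₁
    rw [π.min_image_eq_of_argminOn_mem hne subset_union_right h₂]
    simpa [h₁, h₂] using π.coe_apply_argminOn_lt_min_image hne subset_union_left h₁

section Counting

variable [Fintype Ω] [DecidableEq Ω]

theorem card_filter_argminOn_eq_eq {x y : Ω} (hx : x ∈ U) (hy : y ∈ U) :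
    #{π : Perm Ω | π.argminOn U hU = x} = #{π : Perm Ω | π.argminOn U hU = y} :=
  card_equiv (Equiv.mulRight (swap x y)) fun π => by
    simp only [mem_filter, mem_univ, true_and, coe_mulRight]
    rw [argminOn_mul_swap π hU hx hy, swap_apply_eq_iff, swap_apply_right]

theorem card_filter_argminOn_mem {T : Finset Ω} (hTU : T ⊆ U) {x : Ω} (hx : x ∈ U) :
    #{π : Perm Ω | π.argminOn U hU ∈ T} = #T * #{π : Perm Ω | π.argminOn U hU = x} := by
  rw [← sum_card_fiberwise_eq_card_filter]
  exact sum_const_nat fun y hy => card_filter_argminOn_eq_eq hU (hTU hy) hx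

theorem card_filter_argminOn_mem_div_card {T : Finset Ω} (hTU : T ⊆ U) :
    (#{π : Perm Ω | π.argminOn U hU ∈ T} : ℝ) / Fintype.card (Perm Ω) = #T / #U := by
  obtain ⟨x, hx⟩ := hU
  have htotal : Fintype.card (Perm Ω) = #U * #{π : Perm Ω | π.argminOn U ⟨x, hx⟩ = x} := by
    rw [← card_filter_argminOn_mem ⟨x, hx⟩ subset_rfl hx, filter_true_of_mem fun π _ =>
      π.argminOn_mem ⟨x, hx⟩, card_univ]
  have hfiber : #{π : Perm Ω | π.argminOn U ⟨x, hx⟩ = x} ≠ 0 := by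
    intro h
    simp [h] at htotal
  rw [htotal, card_filter_argminOn_mem ⟨x, hx⟩ hTU hx]
  push_cast
  exact mul_div_mul_right _ _ (Nat.cast_ne_zero.2 hfiber)

end Counting

end Equiv.Perm

theorem minwise_greater_prob {Ω : Type*} [Fintype Ω] [LinearOrder Ω] [DecidableEq Ω]
    (S1 S2 : Finset Ω) (f1 f2 a : ℕ)
    (hf1 : S1.card = f1) (hf2 : S2.card = f2) (ha : (S1 ∩ S2).card = a)
    (hne : (S1 ∪ S2).Nonempty) :
    ((Finset.univ.filter
        (fun π : Equiv.Perm Ω => (S2.image π).min < (S1.image π).min)).card : ℝ)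
      / (Fintype.card (Equiv.Perm Ω) : ℝ)
      = ((f2 : ℝ) - (a : ℝ)) / ((f1 : ℝ) + (f2 : ℝ) - (a : ℝ)) := by
  rw [filter_congr fun π _ => π.min_image_lt_min_image_iff hne,
    Equiv.Perm.card_filter_argminOn_mem_div_card hne (sdiff_subset.trans subset_union_right)]
  have hsdiff : (#(S2 \ S1) : ℝ) = f2 - a := by
    rw [← hf2, ← ha, inter_comm, ← card_sdiff_add_card_inter S2 S1]
    push_cast
    ring
  have hunion : (#(S1 ∪ S2) : ℝ) = f1 + f2 - a := by
    rw [← hf1, ← hf2, ← ha, eq_sub_iff_add_eq]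
    exact_mod_cast card_union_add_card_inter S1 S2
  rw [hsdiff, hunion]
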